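/- Let |φ⟩ = Σ a_{ij}|ij⟩ be a unit vector in ℂ^{d1}⊗ℂ^{d2} with d1, d2 ≥ 2. Then C²(|φ⟩) ≥ (1/((d1−1)(d2−1))) · Σ C²(|φ⟩_{2⊗2}), where the sum runs over all (d1 choose 2)(d2 choose 2) choices of index pairs i_1<i_2, j_1<j_2, |φ⟩_{2⊗2} = Σ_{i∈{i_1,i_2}, j∈{j_1,j_2}} a_{ij}|ij⟩ is the corresponding unnormalized two-qubit substate, and C² of an unnormalized two-qubit vector with coefficients b is given by the homogeneous formula C²(ψ) = Σ_{i,p∈{i_1,i_2}} Σ_{j,q∈{j_1,j_2}} |b_{ij}b_{pq} − b_{pj}b_{iq}|². -/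

import Mathlib

open scoped BigOperators

namespace Stmt11

/-- The (unnormalized) projector `|v⟩⟨v|` associated to a vector `v`. -/
noncomputable def outer {I : Type*} (v : I → ℂ) : Matrix I I ℂ :=
  Matrix.of fun x y => v x * (starRingEnd ℂ) (v y)

/-- `tr(ρ₁²)` where `ρ₁` is the reduced matrix of a bipartite matrix `ρ`
on the first factor. -/
noncomputable def tr1sq {d1 d2 : ℕ}
    (ρ : Matrix (Fin d1 × Fin d2) (Fin d1 × Fin d2) ℂ) : ℂ :=
  ∑ i, ∑ p, (∑ j, ρ (i, j) (p, j)) * (∑ j, ρ (p, j) (i, j))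

/-- Bipartite pure-state concurrence `C(|φ⟩) = √(2(1 − tr(ρ₁²)))`. -/
noncomputable def pureC2 {d1 d2 : ℕ} (φ : Fin d1 × Fin d2 → ℂ) : ℝ :=
  Real.sqrt (2 * (1 - (tr1sq (outer φ)).re))

/-- Squared concurrence of a (possibly unnormalized) two-qubit vector,
given by the homogeneous coefficient formula. -/
noncomputable def C2sqCoeff (b : Fin 2 × Fin 2 → ℂ) : ℝ :=
  ∑ i, ∑ p, ∑ j, ∑ q,
    ‖b (i, j) * b (p, q) - b (p, j) * b (i, q)‖ ^ 2

/-- The (unnormalized) two-qubit substate of `a` determined by the index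
pairs `i₁,i₂` and `j₁,j₂`. -/
noncomputable def subvec {d1 d2 : ℕ} (a : Fin d1 × Fin d2 → ℂ)
    (i₁ i₂ : Fin d1) (j₁ j₂ : Fin d2) : Fin 2 × Fin 2 → ℂ :=
  fun x => a (if x.1 = 0 then i₁ else i₂, if x.2 = 0 then j₁ else j₂)

/-!
Expanding `|u − v|² = |u|² + |v|² − 2 Re(u v̄)` shows that the sum over all `i, p, j, q` of the
squared minors `|a_{ij} a_{pq} − a_{pj} a_{iq}|²` equals `2((Σ |a_x|²)² − tr ρ₁²)`, i.e. `C²(|φ⟩)`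
for a unit vector. The squared minor is symmetric in `i ↔ p` and in `j ↔ q` and vanishes when
`i = p` or `j = q`, so this sum is four times the sum over `i < p`, `j < q`; and four times one
squared minor is exactly `C²` of the corresponding two-qubit substate. Hence the substates'
concurrences add up to `C²(|φ⟩)`, and `1 / ((d₁ − 1)(d₂ − 1)) ≤ 1`.
-/

open ComplexConjugate

theorem sum_sum_eq_two_mul_sum_sum_ite_lt {ι R : Type*} [Fintype ι] [LinearOrder ι]
    [NonAssocSemiring R] (f : ι → ι → R) (hdiag : ∀ i, f i i = 0)
    (hsymm : ∀ i p, f i p = f p i) :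
    ∑ i, ∑ p, f i p = 2 * ∑ i, ∑ p, if i < p then f i p else 0 := by
  set g : ι → ι → R := fun i p => if i < p then f i p else 0
  have hsplit : ∀ i p, f i p = g i p + g p i := by
    intro i p
    rcases lt_trichotomy i p with h | rfl | h
    · simp [g, h, h.not_gt]
    · simp [g, hdiag]
    · simp [g, h, h.not_gt, hsymm i p]
  calc ∑ i, ∑ p, f i p = ∑ i, ∑ p, g i p + ∑ i, ∑ p, g p i := by
        simp only [hsplit, Finset.sum_add_distrib]
    _ = 2 * ∑ i, ∑ p, g i p := by rw [Finset.sum_comm (f := fun i p => g p i), two_mul]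

theorem sq_sum_prod_type {ι κ R : Type*} [Fintype ι] [Fintype κ] [CommSemiring R]
    (f : ι × κ → R) : (∑ x, f x) ^ 2 = ∑ i, ∑ p, ∑ j, ∑ q, f (i, j) * f (p, q) := by
  simp only [sq, Fintype.sum_prod_type, Finset.sum_mul_sum]

section Minors

variable {ι κ : Type*}

noncomputable def minorSq (a : ι × κ → ℂ) (i p : ι) (j q : κ) : ℝ :=
  ‖a (i, j) * a (p, q) - a (p, j) * a (i, q)‖ ^ 2

variable (a : ι × κ → ℂ)

theorem minorSq_self_left (i : ι) (j q : κ) : minorSq a i i j q = 0 := by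
  simp [minorSq]

theorem minorSq_self_right (i p : ι) (j : κ) : minorSq a i p j j = 0 := by
  simp [minorSq, mul_comm]

theorem minorSq_comm_left (i p : ι) (j q : κ) : minorSq a i p j q = minorSq a p i j q := by
  rw [minorSq, minorSq, ← norm_neg, neg_sub]

theorem minorSq_comm_right (i p : ι) (j q : κ) : minorSq a i p j q = minorSq a i p q j := by
  rw [minorSq, minorSq, ← norm_neg, neg_sub, mul_comm (a (i, q)), mul_comm (a (p, q))]

theorem sum_minorSq_nonneg [Fintype ι] [Fintype κ] :
    0 ≤ ∑ i, ∑ p, ∑ j, ∑ q, minorSq a i p j q :=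
  Finset.sum_nonneg fun _ _ => Finset.sum_nonneg fun _ _ =>
    Finset.sum_nonneg fun _ _ => Finset.sum_nonneg fun _ _ => sq_nonneg _

theorem sum_minorSq_eq_sum_ite_lt [Fintype ι] [LinearOrder ι] [Fintype κ] [LinearOrder κ] :
    ∑ i, ∑ p, ∑ j, ∑ q, minorSq a i p j q =
      ∑ i, ∑ p, ∑ j, ∑ q, if i < p ∧ j < q then 4 * minorSq a i p j q else 0 := by
  rw [sum_sum_eq_two_mul_sum_sum_ite_lt _ (fun i => by simp [minorSq_self_left])
    (fun i p => by simp only [minorSq_comm_left a i p])]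
  simp_rw [sum_sum_eq_two_mul_sum_sum_ite_lt _ (minorSq_self_right a _ _)
    (minorSq_comm_right a _ _), ite_and, Finset.mul_sum]
  refine Finset.sum_congr rfl fun i _ => Finset.sum_congr rfl fun p _ => ?_
  split_ifs
  · simp only [Finset.mul_sum, mul_ite, mul_zero, ← mul_assoc]
    norm_num
  · simp

end Minors

theorem C2sqCoeff_eq_four_mul_minorSq (b : Fin 2 × Fin 2 → ℂ) :
    C2sqCoeff b = 4 * minorSq b 0 1 0 1 := by
  rw [show C2sqCoeff b = ∑ i, ∑ p, ∑ j, ∑ q, minorSq b i p j q from rfl,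
    sum_minorSq_eq_sum_ite_lt]
  simp [Fin.sum_univ_two]

theorem minorSq_subvec {d1 d2 : ℕ} (a : Fin d1 × Fin d2 → ℂ) (i₁ i₂ : Fin d1)
    (j₁ j₂ : Fin d2) : minorSq (subvec a i₁ i₂ j₁ j₂) 0 1 0 1 = minorSq a i₁ i₂ j₁ j₂ := by
  simp [minorSq, subvec]

theorem tr1sq_outer {d1 d2 : ℕ} (a : Fin d1 × Fin d2 → ℂ) :
    tr1sq (outer a) =
      ∑ i, ∑ p, ∑ j, ∑ q, a (i, j) * a (p, q) * conj (a (p, j) * a (i, q)) := by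
  simp only [tr1sq, outer, Matrix.of_apply, Finset.sum_mul_sum, map_mul]
  refine Finset.sum_congr rfl fun i _ => Finset.sum_congr rfl fun p _ =>
    Finset.sum_congr rfl fun j _ => Finset.sum_congr rfl fun q _ => by ring

theorem sum_minorSq_eq {d1 d2 : ℕ} (a : Fin d1 × Fin d2 → ℂ) :
    ∑ i, ∑ p, ∑ j, ∑ q, minorSq a i p j q =
      2 * ((∑ x, Complex.normSq (a x)) ^ 2 - (tr1sq (outer a)).re) := by
  have hterm : ∀ i p j q, minorSq a i p j q =
      Complex.normSq (a (i, j)) * Complex.normSq (a (p, q)) +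
        Complex.normSq (a (p, j)) * Complex.normSq (a (i, q)) -
        2 * (a (i, j) * a (p, q) * conj (a (p, j) * a (i, q))).re := by
    intro i p j q
    rw [minorSq, Complex.sq_norm, Complex.normSq_sub, Complex.normSq_mul, Complex.normSq_mul]
  have hswap : ∑ i, ∑ p, ∑ j, ∑ q, Complex.normSq (a (p, j)) * Complex.normSq (a (i, q)) =
      ∑ i, ∑ p, ∑ j, ∑ q, Complex.normSq (a (i, j)) * Complex.normSq (a (p, q)) :=
    Finset.sum_comm
  simp only [hterm, Finset.sum_add_distrib, Finset.sum_sub_distrib]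
  rw [hswap, ← sq_sum_prod_type fun x => Complex.normSq (a x)]
  simp only [← Finset.mul_sum, tr1sq_outer, Complex.re_sum]
  ring

theorem pureC2_sq_eq_sum_minorSq {d1 d2 : ℕ} (a : Fin d1 × Fin d2 → ℂ)
    (ha : ∑ x, Complex.normSq (a x) = 1) :
    pureC2 a ^ 2 = ∑ i, ∑ p, ∑ j, ∑ q, minorSq a i p j q := by
  have hsum := sum_minorSq_eq a
  rw [ha, one_pow] at hsum
  rw [pureC2, Real.sq_sqrt (hsum ▸ sum_minorSq_nonneg a), hsum]

/-- for a unit vector `|φ⟩ = Σ a_{ij}|ij⟩` in `ℂ^{d1}⊗ℂ^{d2}`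
with `d1, d2 ≥ 2`,
`C²(|φ⟩) ≥ (1/((d1−1)(d2−1))) Σ C²(|φ⟩_{2⊗2})`, the sum over all choices of
index pairs `i₁<i₂`, `j₁<j₂`. -/
theorem stmt_11 {d1 d2 : ℕ} (hd1 : 2 ≤ d1) (hd2 : 2 ≤ d2)
    (a : Fin d1 × Fin d2 → ℂ)
    (ha : ∑ x, Complex.normSq (a x) = 1) :
    (pureC2 a) ^ 2 ≥
      (1 / (((d1 : ℝ) - 1) * ((d2 : ℝ) - 1))) *
        ∑ i₁, ∑ i₂, ∑ j₁, ∑ j₂,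
          if i₁ < i₂ ∧ j₁ < j₂ then C2sqCoeff (subvec a i₁ i₂ j₁ j₂) else 0 := by
  have hsum : (∑ i₁, ∑ i₂, ∑ j₁, ∑ j₂,
      if i₁ < i₂ ∧ j₁ < j₂ then C2sqCoeff (subvec a i₁ i₂ j₁ j₂) else 0) = pureC2 a ^ 2 := by
    simp only [C2sqCoeff_eq_four_mul_minorSq, minorSq_subvec]
    rw [← sum_minorSq_eq_sum_ite_lt, pureC2_sq_eq_sum_minorSq a ha]
  have hdim : 1 ≤ ((d1 : ℝ) - 1) * ((d2 : ℝ) - 1) := by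
    have h1 : (2 : ℝ) ≤ d1 := by exact_mod_cast hd1
    have h2 : (2 : ℝ) ≤ d2 := by exact_mod_cast hd2
    exact one_le_mul_of_one_le_of_one_le (by linarith) (by linarith)
  rw [hsum, ge_iff_le]
  exact mul_le_of_le_one_left (sq_nonneg _) (div_le_one_of_le₀ hdim (by linarith))

end Stmt11
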